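/- Let n ≥ 1 and let A = {a_1,…,a_n}, B = {b_1,…,b_n}, C = {c_1,…,c_n} be pairwise disjoint sets, and let 𝒯 ⊆ A×B×C be a set of m triples. Construct a digraph G as follows: take as vertices a_1,…,a_n, b_1,…,b_n, c_1,…,c_n; for each triple T = (a_i,b_j,c_p) ∈ 𝒯 add six new vertices x_0^T, x_1^T, y_0^T, y_1^T, z_0^T, z_1^T and the arcs (x_0^T,x_1^T), (x_1^T,a_i), (x_1^T,y_0^T), (y_0^T,y_1^T), (y_1^T,b_j), (x_0^T,z_0^T), (z_0^T,z_1^T), (z_1^T,c_p); finally add a new vertex s with an arc from s to every other vertex, and a new vertex t with an arc from every vertex other than s to t. Then 𝒯 contains n pairwise disjoint triples (equivalently, a subfamily of triples covering each element of A ∪ B ∪ C exactly once) if and only if G contains a subdivision of a ((n+2m)×4)-spindle. -/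

import Mathlib

/-!
A perfect matching `S` yields `n + 2m` internally disjoint `(s,t)`-paths of length 4: the
paths `s x0 x1 a t` through the triples of `S` (one for each `a`), and for every triple the
paths `s y0 y1 b t`, `s z0 z1 c t` if it lies in `S`, and `s x1 y0 y1 t`, `s x0 z0 z1 t` if not.

Conversely, `n + 2m` internally disjoint paths of length at least 4 need `3(n + 2m)` internal
vertices, which is every vertex but their two ends. So each path has exactly three internal
vertices, the ends are `s` and `t` (no arc enters `s` or leaves `t`), and the internal parts
partition `G - s - t` into paths on three vertices, each inside a single gadget. The triples
whose `x0` starts a path to some `a` form the matching: their `y1` and `z1` can then only be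
covered by paths ending at their `b` and `c`.
-/

/-- `p` is a directed path: a nonempty list of pairwise distinct vertices in which
consecutive vertices are joined by arcs of the digraph with arc relation `A`. -/
def IsPath {V : Type*} (A : V → V → Prop) (p : List V) : Prop :=
  p ≠ [] ∧ p.Nodup ∧ p.Chain' A

/-- `p` is a directed `(u,v)`-path. -/
def IsPathFT {V : Type*} (A : V → V → Prop) (u v : V) (p : List V) : Prop :=
  IsPath A p ∧ p.head? = some u ∧ p.getLast? = some v

/-- The digraph with arc relation `A` contains a subdivision of a `(k × l)`-spindle
with tail `s` and head `t`: `k` pairwise distinct and pairwise internally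
vertex-disjoint `(s,t)`-paths, each of length (number of arcs) at least `l`. -/
def SpindleAt {V : Type*} (A : V → V → Prop) (k l : ℕ) (s t : V) : Prop :=
  ∃ P : Fin k → List V,
    (∀ i, IsPathFT A s t (P i) ∧ l + 1 ≤ (P i).length) ∧
    ∀ i j, i ≠ j → P i ≠ P j ∧ ∀ x, x ∈ P i → x ∈ P j → x = s ∨ x = t

/-- The vertices of the digraph `G` built from an instance of 3-Dimensional Matching
with elements `a i, b i, c i` (`i : Fin n`) and `m` triples: for each triple `i : Fin m`
there are six gadget vertices `x0 i, x1 i, y0 i, y1 i, z0 i, z1 i`, plus a global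
source `s` and sink `t`. -/
inductive Vtx (n m : ℕ) where
  | a : Fin n → Vtx n m
  | b : Fin n → Vtx n m
  | c : Fin n → Vtx n m
  | x0 : Fin m → Vtx n m
  | x1 : Fin m → Vtx n m
  | y0 : Fin m → Vtx n m
  | y1 : Fin m → Vtx n m
  | z0 : Fin m → Vtx n m
  | z1 : Fin m → Vtx n m
  | s : Vtx n m
  | t : Vtx n m

/-- The arcs of the digraph `G` built from the 3-Dimensional Matching instance whose
triples are `T i = (a-, b-, c-coordinate)`: the gadget arcs
`(x0,x1), (x1,a), (x1,y0), (y0,y1), (y1,b), (x0,z0), (z0,z1), (z1,c)` for each triple,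
an arc from `s` to every other vertex, and an arc from every vertex other than `s`
(and `t`) to `t`. -/
def arcRel {n m : ℕ} (T : Fin m → Fin n × Fin n × Fin n) :
    Vtx n m → Vtx n m → Prop := fun u v =>
  (u = .s ∧ v ≠ .s ∧ v ≠ .t) ∨
  (v = .t ∧ u ≠ .s ∧ u ≠ .t) ∨
  (∃ i, u = .x0 i ∧ v = .x1 i) ∨
  (∃ i, u = .x1 i ∧ v = .a (T i).1) ∨
  (∃ i, u = .x1 i ∧ v = .y0 i) ∨
  (∃ i, u = .y0 i ∧ v = .y1 i) ∨
  (∃ i, u = .y1 i ∧ v = .b (T i).2.1) ∨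
  (∃ i, u = .x0 i ∧ v = .z0 i) ∨
  (∃ i, u = .z0 i ∧ v = .z1 i) ∨
  (∃ i, u = .z1 i ∧ v = .c (T i).2.2)


deriving instance DecidableEq for Vtx
deriving instance Fintype for Vtx

theorem List.IsChain.head?_eq_of_mem_of_forall_not_rel {α : Type*} {R : α → α → Prop}
    {p : List α} {x : α} (hp : p.IsChain R) (hx : x ∈ p) (hin : ∀ y, ¬ R y x) :
    p.head? = some x := by
  induction p with
  | nil => simp at hx
  | cons a q ih =>
    rcases List.mem_cons.1 hx with rfl | hxq
    · rfl
    cases q with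
    | nil => simp at hxq
    | cons b r =>
      obtain ⟨hab, hbr⟩ := List.isChain_cons_cons.1 hp
      obtain rfl : b = x := by simpa using ih hbr hxq
      exact absurd hab (hin a)

theorem List.IsChain.getLast?_eq_of_mem_of_forall_not_rel {α : Type*} {R : α → α → Prop}
    {p : List α} {x : α} (hp : p.IsChain R) (hx : x ∈ p) (hout : ∀ y, ¬ R x y) :
    p.getLast? = some x := by
  rw [← List.head?_reverse]
  exact List.IsChain.head?_eq_of_mem_of_forall_not_rel (List.isChain_reverse.2 hp)
    (List.mem_reverse.2 hx) hout

theorem isPath_iff {V : Type*} {A : V → V → Prop} {p : List V} :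
    IsPath A p ↔ p ≠ [] ∧ p.Nodup ∧ p.IsChain A :=
  Iff.rfl

namespace IsPathFT

variable {V : Type*} {A : V → V → Prop} {u v x : V} {p : List V}

theorem eq_of_mem_of_forall_not_arc_to (hp : IsPathFT A u v p) (hx : x ∈ p)
    (hin : ∀ y, ¬ A y x) : x = u := by
  simpa [hp.2.1] using (hp.1.2.2.head?_eq_of_mem_of_forall_not_rel hx hin).symm

theorem eq_of_mem_of_forall_not_arc_from (hp : IsPathFT A u v p) (hx : x ∈ p)
    (hout : ∀ y, ¬ A x y) : x = v := by
  simpa [hp.2.2] using (hp.1.2.2.getLast?_eq_of_mem_of_forall_not_rel hx hout).symm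

theorem exists_eq_cons_append (hp : IsPathFT A u v p) (hlen : 2 ≤ p.length) :
    ∃ c, p = u :: c ++ [v] := by
  obtain ⟨-, hu, hv⟩ := hp
  cases p with
  | nil => simp at hlen
  | cons a q =>
    obtain rfl : a = u := by simpa using hu
    have hq : q ≠ [] := by rintro rfl; simp at hlen
    obtain rfl : q.getLast hq = v := by
      simpa [List.getLast?_cons, List.getLast?_eq_some_getLast hq] using hv
    exact ⟨q.dropLast, by rw [List.cons_append, List.dropLast_append_getLast]⟩

theorem ne (hp : IsPathFT A u v p) (hlen : 2 ≤ p.length) : u ≠ v := by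
  obtain ⟨c, rfl⟩ := hp.exists_eq_cons_append hlen
  have hnd := hp.1.2.1
  rintro rfl
  simp at hnd

end IsPathFT

section Spindle

variable {V : Type*} {A : V → V → Prop} {k l : ℕ} {u v : V}

theorem spindleAt_of_le_card {paths : Finset (List V)} (hk : k ≤ paths.card)
    (hpath : ∀ p ∈ paths, IsPathFT A u v p ∧ l + 1 ≤ p.length)
    (hdisj : ∀ p ∈ paths, ∀ q ∈ paths, p ≠ q → ∀ x, x ∈ p → x ∈ q → x = u ∨ x = v) :
    SpindleAt A k l u v := by
  let e : Fin k ↪ paths := (Fin.castLEEmb hk).trans paths.equivFin.symm.toEmbedding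
  have hne : ∀ i j, i ≠ j → (e i : List V) ≠ e j := fun i j hij h =>
    hij (e.injective (Subtype.ext h))
  exact ⟨fun i => e i, fun i => hpath _ (e i).2,
    fun i j hij => ⟨hne i j hij, hdisj _ (e i).2 _ (e j).2 (hne i j hij)⟩⟩

theorem length_eq_and_exists_mem_of_card_le [Fintype V] [DecidableEq V] {P : Fin k → List V}
    (hP : ∀ i, IsPathFT A u v (P i) ∧ l + 2 ≤ (P i).length)
    (hdisj : ∀ i j, i ≠ j → ∀ x, x ∈ P i → x ∈ P j → x = u ∨ x = v)
    (huv : u ≠ v) (hcard : Fintype.card V ≤ k * l + 2) :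
    (∀ i, (P i).length = l + 2) ∧ ∀ x, x ≠ u → x ≠ v → ∃ i, x ∈ P i := by
  set I : Fin k → Finset V := fun i => (P i).toFinset \ {u, v}
  have hI : ∀ i, (I i).card + 2 = (P i).length := by
    intro i
    obtain ⟨⟨⟨-, hnd, -⟩, hu, hv⟩, -⟩ := hP i
    have huv' : {u, v} ⊆ (P i).toFinset := by
      simp [Finset.insert_subset_iff, List.mem_of_mem_head? hu, List.mem_of_mem_getLast? hv]
    have := Finset.card_le_card huv'
    rw [Finset.card_sdiff_of_subset huv', List.toFinset_card_of_nodup hnd, Finset.card_pair huv]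
      at *
    omega
  have hIdisj : Set.PairwiseDisjoint ↑(Finset.univ : Finset (Fin k)) I := by
    intro i _ j _ hij
    refine Finset.disjoint_left.2 fun x hxi hxj => ?_
    simp only [I, Finset.mem_sdiff, List.mem_toFinset, Finset.mem_insert,
      Finset.mem_singleton] at hxi hxj
    exact hxi.2 (hdisj i j hij x hxi.1 hxj.1)
  have hsub : Finset.univ.biUnion I ⊆ Finset.univ \ {u, v} := by
    intro x hx
    obtain ⟨i, -, hxi⟩ := Finset.mem_biUnion.1 hx
    exact Finset.mem_sdiff.2 ⟨Finset.mem_univ x, (Finset.mem_sdiff.1 hxi).2⟩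
  have hsum_le : ∀ i, l ≤ (I i).card := fun i => by
    have := hI i; have := (hP i).2; omega
  have hsum : ∑ _i : Fin k, l ≤ ∑ i, (I i).card := Finset.sum_le_sum fun i _ => hsum_le i
  have hbound : (Finset.univ \ {u, v} : Finset V).card ≤ ∑ _i : Fin k, l := by
    rw [Finset.card_sdiff_of_subset (Finset.subset_univ _), Finset.card_pair huv,
      Finset.card_univ, Finset.sum_const, Finset.card_univ, Fintype.card_fin, smul_eq_mul]
    omega
  have hunion : (Finset.univ.biUnion I).card = ∑ i, (I i).card := Finset.card_biUnion hIdisj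
  have hcard_le := Finset.card_le_card hsub
  have htight : ∑ _i : Fin k, l = ∑ i, (I i).card := by omega
  refine ⟨fun i => ?_, fun x hxu hxv => ?_⟩
  · have := (Finset.sum_eq_sum_iff_of_le fun i _ => hsum_le i).1 htight i (Finset.mem_univ i)
    have := hI i
    omega
  · have hcover := Finset.eq_of_subset_of_card_le hsub (by omega)
    have hx : x ∈ Finset.univ \ {u, v} := by simp [hxu, hxv]
    obtain ⟨i, -, hxi⟩ := Finset.mem_biUnion.1 (hcover ▸ hx)
    exact ⟨i, List.mem_toFinset.1 (Finset.mem_sdiff.1 hxi).1⟩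

end Spindle

section Gadget

variable {n m : ℕ} {T : Fin m → Fin n × Fin n × Fin n}

theorem Vtx.card_eq : Fintype.card (Vtx n m) = 3 * n + 6 * m + 2 := by
  rw [← Fintype.card_congr (Vtx.proxyTypeEquiv n m)]
  simp
  ring

theorem not_arcRel_to_s (x : Vtx n m) : ¬ arcRel T x .s := by
  simp [arcRel]

theorem not_arcRel_from_t (y : Vtx n m) : ¬ arcRel T .t y := by
  simp [arcRel]

/-- The six paths on three vertices of `G - s - t`, named after their last vertex; each runs
inside the gadget of a single triple. -/
inductive IsGadgetChain (T : Fin m → Fin n × Fin n × Fin n) : List (Vtx n m) → Prop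
  | toA (i : Fin m) : IsGadgetChain T [.x0 i, .x1 i, .a (T i).1]
  | toY0 (i : Fin m) : IsGadgetChain T [.x0 i, .x1 i, .y0 i]
  | toY1 (i : Fin m) : IsGadgetChain T [.x1 i, .y0 i, .y1 i]
  | toB (i : Fin m) : IsGadgetChain T [.y0 i, .y1 i, .b (T i).2.1]
  | toZ1 (i : Fin m) : IsGadgetChain T [.x0 i, .z0 i, .z1 i]
  | toC (i : Fin m) : IsGadgetChain T [.z0 i, .z1 i, .c (T i).2.2]

namespace IsGadgetChain

variable {c : List (Vtx n m)}

theorem length_eq (hc : IsGadgetChain T c) : c.length = 3 := by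
  cases hc <;> rfl

theorem s_not_mem (hc : IsGadgetChain T c) : .s ∉ c := by
  cases hc <;> simp

theorem t_not_mem (hc : IsGadgetChain T c) : .t ∉ c := by
  cases hc <;> simp

theorem exists_eq_of_a_mem {p : Fin n} (hc : IsGadgetChain T c) (hp : .a p ∈ c) :
    ∃ i, (T i).1 = p ∧ c = [.x0 i, .x1 i, .a (T i).1] := by
  cases hc <;> simp_all

theorem eq_or_eq_of_y1_mem {i : Fin m} (hc : IsGadgetChain T c) (hi : .y1 i ∈ c) :
    c = [.x1 i, .y0 i, .y1 i] ∨ c = [.y0 i, .y1 i, .b (T i).2.1] := by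
  cases hc <;> simp_all

theorem eq_or_eq_of_z1_mem {i : Fin m} (hc : IsGadgetChain T c) (hi : .z1 i ∈ c) :
    c = [.x0 i, .z0 i, .z1 i] ∨ c = [.z0 i, .z1 i, .c (T i).2.2] := by
  cases hc <;> simp_all

theorem of_arcRel {u v w : Vtx n m} (hu : u ≠ .s) (hw : w ≠ .t) (huv : arcRel T u v)
    (hvw : arcRel T v w) : IsGadgetChain T [u, v, w] := by
  rcases huv with ⟨rfl, -⟩ | ⟨rfl, -⟩ | ⟨i, rfl, rfl⟩ | ⟨i, rfl, rfl⟩ | ⟨i, rfl, rfl⟩ |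
      ⟨i, rfl, rfl⟩ | ⟨i, rfl, rfl⟩ | ⟨i, rfl, rfl⟩ | ⟨i, rfl, rfl⟩ | ⟨i, rfl, rfl⟩
  · exact absurd rfl hu
  · exact absurd hvw (not_arcRel_from_t w)
  all_goals
    rcases hvw with ⟨h, -⟩ | ⟨rfl, -⟩ | ⟨j, h, rfl⟩ | ⟨j, h, rfl⟩ | ⟨j, h, rfl⟩ |
        ⟨j, h, rfl⟩ | ⟨j, h, rfl⟩ | ⟨j, h, rfl⟩ | ⟨j, h, rfl⟩ | ⟨j, h, rfl⟩
    all_goals first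
      | exact absurd rfl hw
      | simp only [reduceCtorEq, Vtx.x1.injEq, Vtx.y0.injEq, Vtx.y1.injEq, Vtx.z0.injEq,
          Vtx.z1.injEq] at h <;> (subst h; constructor)

end IsGadgetChain

theorem isPathFT_s_t_iff_isGadgetChain {c : List (Vtx n m)} (hc : c.length = 3) :
    IsPathFT (arcRel T) .s .t (.s :: c ++ [.t]) ↔ IsGadgetChain T c := by
  obtain ⟨u, v, w, rfl⟩ := List.length_eq_three.1 hc
  constructor
  · rintro ⟨hpath, -⟩
    obtain ⟨-, hnd, hchain⟩ := isPath_iff.1 hpath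
    simp only [List.cons_append, List.nil_append, List.isChain_cons_cons] at hchain
    simp only [List.cons_append, List.nil_append, List.nodup_cons, List.mem_cons] at hnd
    exact IsGadgetChain.of_arcRel (by tauto) (by tauto) hchain.2.1 hchain.2.2.1
  · intro h
    cases h <;> simp [IsPathFT, isPath_iff, arcRel]

end Gadget

section Partition

variable {n m : ℕ} {T : Fin m → Fin n × Fin n × Fin n}

/-- A partition of `G - s - t` into gadget chains, `f x` being the chain through `x`. -/
structure IsChainPartition (T : Fin m → Fin n × Fin n × Fin n)
    (f : Vtx n m → List (Vtx n m)) : Prop where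
  isGadgetChain : ∀ x, x ≠ .s → x ≠ .t → IsGadgetChain T (f x)
  mem_self : ∀ x, x ≠ .s → x ≠ .t → x ∈ f x
  eq_of_mem : ∀ x y, y ∈ f x → f y = f x

namespace IsChainPartition

variable {f : Vtx n m → List (Vtx n m)}

theorem eq_of_mem_of_mem (hf : IsChainPartition T f) {x x' y : Vtx n m} (hx : y ∈ f x)
    (hx' : y ∈ f x') : f x = f x' :=
  (hf.eq_of_mem x y hx).symm.trans (hf.eq_of_mem x' y hx')

theorem spindleAt (hf : IsChainPartition T f) : SpindleAt (arcRel T) (n + 2 * m) 4 .s .t := by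
  set V₀ : Finset (Vtx n m) := Finset.univ \ {.s, .t}
  have hV₀ : ∀ {x}, x ∈ V₀ ↔ x ≠ .s ∧ x ≠ .t := by simp [V₀]
  set C := V₀.image f
  have hC : ∀ c ∈ C, IsGadgetChain T c := by
    simp only [C, Finset.mem_image, hV₀]
    rintro _ ⟨x, hx, rfl⟩
    exact hf.isGadgetChain x hx.1 hx.2
  have hcard : 3 * (n + 2 * m) ≤ 3 * C.card := calc
    3 * (n + 2 * m) = V₀.card := by
      rw [Finset.card_sdiff_of_subset (Finset.subset_univ _), Finset.card_pair (by simp),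
        Finset.card_univ, Vtx.card_eq]
      omega
    _ ≤ (C.biUnion List.toFinset).card := Finset.card_le_card fun x hx =>
      Finset.mem_biUnion.2 ⟨f x, Finset.mem_image_of_mem f hx,
        List.mem_toFinset.2 (hf.mem_self x (hV₀.1 hx).1 (hV₀.1 hx).2)⟩
    _ ≤ ∑ c ∈ C, c.toFinset.card := Finset.card_biUnion_le
    _ ≤ ∑ _c ∈ C, 3 := Finset.sum_le_sum fun c hc =>
      (List.toFinset_card_le c).trans (hC c hc).length_eq.le
    _ = 3 * C.card := by rw [Finset.sum_const, smul_eq_mul, mul_comm]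
  have hwrap : Function.Injective fun c : List (Vtx n m) => .s :: c ++ [.t] := by
    intro c c' h
    simpa using h
  refine spindleAt_of_le_card (paths := C.image fun c => .s :: c ++ [.t])
    (by rw [Finset.card_image_of_injective _ hwrap]; omega) ?_ ?_
  · simp only [Finset.mem_image]
    rintro _ ⟨c, hc, rfl⟩
    exact ⟨(isPathFT_s_t_iff_isGadgetChain (hC c hc).length_eq).2 (hC c hc),
      by simp [(hC c hc).length_eq]⟩
  · simp only [Finset.mem_image, C]
    rintro _ ⟨_, ⟨x, -, rfl⟩, rfl⟩ _ ⟨_, ⟨x', -, rfl⟩, rfl⟩ hne y hy hy'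
    simp only [List.cons_append, List.mem_cons, List.mem_append] at hy hy'
    by_contra! hst
    exact hne (by rw [hf.eq_of_mem_of_mem (y := y) (by tauto) (by tauto)])

end IsChainPartition

theorem exists_isChainPartition_of_spindleAt (hn : 1 ≤ n) {u v : Vtx n m}
    (h : SpindleAt (arcRel T) (n + 2 * m) 4 u v) :
    ∃ f, IsChainPartition T f := by
  obtain ⟨P, hP, hPP⟩ := h
  have hdisj : ∀ i j, i ≠ j → ∀ x, x ∈ P i → x ∈ P j → x = u ∨ x = v :=
    fun i j hij => (hPP i j hij).2
  set i₀ : Fin (n + 2 * m) := ⟨0, by omega⟩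
  have huv : u ≠ v := (hP i₀).1.ne (by have := (hP i₀).2; omega)
  obtain ⟨hlen, hcover⟩ := length_eq_and_exists_mem_of_card_le (l := 3) hP hdisj huv
    (by rw [Vtx.card_eq]; omega)
  have hmem : ∀ x, ∃ i, x ∈ P i := by
    intro x
    by_cases hxu : x = u
    · exact ⟨i₀, hxu ▸ List.mem_of_mem_head? (hP i₀).1.2.1⟩
    by_cases hxv : x = v
    · exact ⟨i₀, hxv ▸ List.mem_of_mem_getLast? (hP i₀).1.2.2⟩
    exact hcover x hxu hxv
  obtain rfl : u = .s := by
    obtain ⟨i, hi⟩ := hmem .s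
    exact ((hP i).1.eq_of_mem_of_forall_not_arc_to hi not_arcRel_to_s).symm
  obtain rfl : v = .t := by
    obtain ⟨i, hi⟩ := hmem .t
    exact ((hP i).1.eq_of_mem_of_forall_not_arc_from hi not_arcRel_from_t).symm
  have hchain : ∀ i, ∃ c, IsGadgetChain T c ∧ P i = .s :: c ++ [.t] := by
    intro i
    obtain ⟨c, hc⟩ := (hP i).1.exists_eq_cons_append (by rw [hlen i]; omega)
    have hc3 : c.length = 3 := by simpa [hc] using hlen i
    exact ⟨c, (isPathFT_s_t_iff_isGadgetChain hc3).1 (hc ▸ (hP i).1), hc⟩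
  choose c hc hPc using hchain
  choose ι hι using hmem
  refine ⟨fun x => c (ι x), fun x _ _ => hc _, fun x hs ht => ?_, fun x y hy => ?_⟩
  · simpa [hPc, hs, ht] using hι x
  · have hyx : y ∈ P (ι x) := by simp [hPc, hy]
    have : ι y = ι x := by
      by_contra hne
      rcases hdisj _ _ hne y (hι y) hyx with rfl | rfl
      · exact (hc _).s_not_mem hy
      · exact (hc _).t_not_mem hy
    simp only [this]

end Partition

section Matching

variable {n m : ℕ} {T : Fin m → Fin n × Fin n × Fin n}

def IsMatching (T : Fin m → Fin n × Fin n × Fin n) (S : Finset (Fin m)) : Prop :=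
  ∀ i ∈ S, ∀ j ∈ S, i ≠ j →
    (T i).1 ≠ (T j).1 ∧ (T i).2.1 ≠ (T j).2.1 ∧ (T i).2.2 ≠ (T j).2.2

/-- The chain partition of a perfect matching `S`: the gadget of a triple of `S` splits into
its chains ending at `a`, `b` and `c`, any other gadget into its chains ending at `y1` and `z1`.
Here `ia p`, `ib p`, `ic p` are the triples of `S` containing `a p`, `b p`, `c p`. -/
def matchingPartition (T : Fin m → Fin n × Fin n × Fin n) (S : Finset (Fin m))
    (ia ib ic : Fin n → Fin m) : Vtx n m → List (Vtx n m)
  | .a p => [.x0 (ia p), .x1 (ia p), .a (T (ia p)).1]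
  | .b p => [.y0 (ib p), .y1 (ib p), .b (T (ib p)).2.1]
  | .c p => [.z0 (ic p), .z1 (ic p), .c (T (ic p)).2.2]
  | .x0 i => if i ∈ S then [.x0 i, .x1 i, .a (T i).1] else [.x0 i, .z0 i, .z1 i]
  | .x1 i => if i ∈ S then [.x0 i, .x1 i, .a (T i).1] else [.x1 i, .y0 i, .y1 i]
  | .y0 i | .y1 i => if i ∈ S then [.y0 i, .y1 i, .b (T i).2.1] else [.x1 i, .y0 i, .y1 i]
  | .z0 i | .z1 i => if i ∈ S then [.z0 i, .z1 i, .c (T i).2.2] else [.x0 i, .z0 i, .z1 i]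
  | .s | .t => []

theorem isChainPartition_matchingPartition {S : Finset (Fin m)} {ia ib ic : Fin n → Fin m}
    (hia : ∀ p, ia p ∈ S ∧ (T (ia p)).1 = p) (hib : ∀ p, ib p ∈ S ∧ (T (ib p)).2.1 = p)
    (hic : ∀ p, ic p ∈ S ∧ (T (ic p)).2.2 = p) (hia' : ∀ i ∈ S, ia (T i).1 = i)
    (hib' : ∀ i ∈ S, ib (T i).2.1 = i) (hic' : ∀ i ∈ S, ic (T i).2.2 = i) :
    IsChainPartition T (matchingPartition T S ia ib ic) where
  isGadgetChain x hs ht := by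
    cases x <;> simp only [matchingPartition] <;> (try split_ifs) <;>
      first | constructor | simp at *
  mem_self x hs ht := by
    cases x <;> simp only [matchingPartition] <;> (try split_ifs) <;> simp_all
  eq_of_mem x y hy := by
    cases x <;> simp only [matchingPartition] at hy ⊢ <;> (try split_ifs at hy ⊢ with hi) <;>
      simp only [List.mem_cons, List.not_mem_nil, or_false] at hy <;>
      rcases hy with rfl | rfl | rfl <;> simp_all

theorem exists_isChainPartition_of_isMatching {S : Finset (Fin m)} (hS : S.card = n)
    (hM : IsMatching T S) : ∃ f, IsChainPartition T f := by
  have hsurj : ∀ g : Fin m → Fin n, Set.InjOn g S → ∀ p, ∃ i ∈ S, g i = p := fun g hg p =>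
    Finset.surjOn_of_injOn_of_card_le g (fun _ _ => Finset.mem_coe.2 (Finset.mem_univ _)) hg
      (by simp [hS]) (Finset.mem_coe.2 (Finset.mem_univ p))
  have hinja : Set.InjOn (fun i => (T i).1) S := fun i hi j hj h =>
    by_contra fun hij => (hM i hi j hj hij).1 h
  have hinjb : Set.InjOn (fun i => (T i).2.1) S := fun i hi j hj h =>
    by_contra fun hij => (hM i hi j hj hij).2.1 h
  have hinjc : Set.InjOn (fun i => (T i).2.2) S := fun i hi j hj h =>
    by_contra fun hij => (hM i hi j hj hij).2.2 h
  choose ia hia using hsurj _ hinja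
  choose ib hib using hsurj _ hinjb
  choose ic hic using hsurj _ hinjc
  exact ⟨_, isChainPartition_matchingPartition hia hib hic
    (fun i hi => hinja (hia _).1 hi (hia _).2) (fun i hi => hinjb (hib _).1 hi (hib _).2)
    (fun i hi => hinjc (hic _).1 hi (hic _).2)⟩

theorem IsChainPartition.exists_isMatching {f : Vtx n m → List (Vtx n m)}
    (hf : IsChainPartition T f) : ∃ S : Finset (Fin m), S.card = n ∧ IsMatching T S := by
  set S := Finset.univ.filter fun i => f (.x0 i) = [.x0 i, .x1 i, .a (T i).1]
  have hx0 : ∀ i ∈ S, f (.x0 i) = [.x0 i, .x1 i, .a (T i).1] := by simp [S]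
  have ha : ∀ i ∈ S, f (.a (T i).1) = [.x0 i, .x1 i, .a (T i).1] := fun i hi => by
    rw [hf.eq_of_mem (.x0 i) _ (by simp [hx0 i hi]), hx0 i hi]
  have hy1 : ∀ i ∈ S, f (.y1 i) = [.y0 i, .y1 i, .b (T i).2.1] := fun i hi => by
    refine ((hf.isGadgetChain _ (by simp) (by simp)).eq_or_eq_of_y1_mem
      (hf.mem_self _ (by simp) (by simp))).resolve_left fun h => ?_
    have := hf.eq_of_mem_of_mem (x := .y1 i) (x' := .x0 i) (y := .x1 i) (by simp [h])
      (by simp [hx0 i hi])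
    simp [h, hx0 i hi] at this
  have hb : ∀ i ∈ S, f (.b (T i).2.1) = [.y0 i, .y1 i, .b (T i).2.1] := fun i hi => by
    rw [hf.eq_of_mem (.y1 i) _ (by simp [hy1 i hi]), hy1 i hi]
  have hz1 : ∀ i ∈ S, f (.z1 i) = [.z0 i, .z1 i, .c (T i).2.2] := fun i hi => by
    refine ((hf.isGadgetChain _ (by simp) (by simp)).eq_or_eq_of_z1_mem
      (hf.mem_self _ (by simp) (by simp))).resolve_left fun h => ?_
    have := hf.eq_of_mem_of_mem (x := .z1 i) (x' := .x0 i) (y := .x0 i) (by simp [h])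
      (by simp [hx0 i hi])
    simp [h, hx0 i hi] at this
  have hc : ∀ i ∈ S, f (.c (T i).2.2) = [.z0 i, .z1 i, .c (T i).2.2] := fun i hi => by
    rw [hf.eq_of_mem (.z1 i) _ (by simp [hz1 i hi]), hz1 i hi]
  have hsurj : ∀ p, ∃ i ∈ S, (T i).1 = p := fun p => by
    obtain ⟨i, rfl, hi⟩ := (hf.isGadgetChain (.a p) (by simp) (by simp)).exists_eq_of_a_mem
      (hf.mem_self _ (by simp) (by simp))
    refine ⟨i, Finset.mem_filter.2 ⟨Finset.mem_univ i, ?_⟩, rfl⟩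
    rw [hf.eq_of_mem (.a (T i).1) (.x0 i) (by simp [hi]), hi]
  have hM : IsMatching T S := fun i hi j hj hij =>
    ⟨fun h => hij (by have := ha j hj; rw [← h, ha i hi] at this; simpa using this),
     fun h => hij (by have := hb j hj; rw [← h, hb i hi] at this; simpa using this),
     fun h => hij (by have := hc j hj; rw [← h, hc i hi] at this; simpa using this)⟩
  refine ⟨S, ?_, hM⟩
  simpa using Finset.card_nbij (t := Finset.univ) (fun i => (T i).1)
    (fun i _ => Finset.mem_coe.2 (Finset.mem_univ _))
    (fun i hi j hj h => by_contra fun hij => (hM i hi j hj hij).1 h)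
    (fun p _ => hsurj p)

end Matching

theorem stmt11_general {n m : ℕ} (hn : 1 ≤ n) (T : Fin m → Fin n × Fin n × Fin n) :
    (∃ S : Finset (Fin m), S.card = n ∧
      ∀ i ∈ S, ∀ j ∈ S, i ≠ j →
        (T i).1 ≠ (T j).1 ∧ (T i).2.1 ≠ (T j).2.1 ∧ (T i).2.2 ≠ (T j).2.2) ↔
    (∃ u v, SpindleAt (arcRel T) (n + 2 * m) 4 u v) := by
  constructor
  · rintro ⟨S, hS, hM⟩
    obtain ⟨f, hf⟩ := exists_isChainPartition_of_isMatching hS hM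
    exact ⟨.s, .t, hf.spindleAt⟩
  · rintro ⟨u, v, h⟩
    obtain ⟨f, hf⟩ := exists_isChainPartition_of_spindleAt hn h
    exact hf.exists_isMatching

theorem stmt11 {n m : ℕ} (hn : 1 ≤ n) (T : Fin m → Fin n × Fin n × Fin n)
    (hT : Function.Injective T) :
    (∃ S : Finset (Fin m), S.card = n ∧
      ∀ i ∈ S, ∀ j ∈ S, i ≠ j →
        (T i).1 ≠ (T j).1 ∧ (T i).2.1 ≠ (T j).2.1 ∧ (T i).2.2 ≠ (T j).2.2) ↔
    (∃ u v, SpindleAt (arcRel T) (n + 2 * m) 4 u v) :=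
  stmt11_general hn T
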